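/- Let ρ = (1 + i√3)/2 ∈ ℍ. A point τ ∈ ℍ lies in the SL₂(ℤ)-orbit of ρ under the Möbius action if and only if there exist integers A, b, c with A² + 4bc = −3 and b·τ² − A·τ − c = 0. (Equivalently: the points of the upper half plane orthogonal, in the Grassmannian model of the lattice ℤ(2) ⊕ U, to vectors of norm −3/2 in the dual lattice are exactly the SL₂(ℤ)-conjugates of ρ.) -/

import Mathlib

open scoped UpperHalfPlane

/-- The point `ρ = (1 + i√3)/2` of the upper half plane. -/
noncomputable def rhoPt : ℍ :=
  ⟨(1 + Real.sqrt 3 * Complex.I) / 2, by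
    have h : ((1 + Real.sqrt 3 * Complex.I) / 2).im = Real.sqrt 3 / 2 := by
      simp [Complex.div_im]
    rw [h]
    positivity⟩

open UpperHalfPlane in
/-- A nonvanishing linear expression at a point of the upper half plane. -/
lemma lin_ne_zero' (z : ℍ) {r s : ℤ} (h : ¬ (r = 0 ∧ s = 0)) :
    (r : ℂ) * (z : ℂ) + (s : ℂ) ≠ 0 := by
  intro h0
  have him := congrArg Complex.im h0
  simp [Complex.add_im, Complex.mul_im] at him
  have hr : r = 0 := by
    rcases him with h' | h'
    · exact_mod_cast h'
    · exact absurd h' z.im_ne_zero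
  have hre := congrArg Complex.re h0
  rw [hr] at hre
  simp at hre
  exact h ⟨hr, by exact_mod_cast hre⟩

/-- Transport of an integral quadratic relation of discriminant `-3` under the
`SL₂(ℤ)` action. -/
lemma Q_smul (g : Matrix.SpecialLinearGroup (Fin 2) ℤ) (τ : ℍ)
    (h : ∃ A b c : ℤ, A ^ 2 + 4 * b * c = -3 ∧
      (b : ℂ) * (τ : ℂ) ^ 2 - (A : ℂ) * (τ : ℂ) - (c : ℂ) = 0) :
    ∃ A b c : ℤ, A ^ 2 + 4 * b * c = -3 ∧
      (b : ℂ) * ((g • τ : ℍ) : ℂ) ^ 2 - (A : ℂ) * ((g • τ : ℍ) : ℂ) - (c : ℂ) = 0 := by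
  obtain ⟨A, b, c, hd, hq⟩ := h
  have hdet : g 0 0 * g 1 1 - g 0 1 * g 1 0 = 1 := by
    have := g.2
    rw [Matrix.det_fin_two] at this
    exact this
  set p := g 0 0 with hp
  set q := g 0 1 with hqq
  set r := g 1 0 with hr
  set s := g 1 1 with hs
  have hden : ((r : ℂ) * (τ : ℂ) + (s : ℂ)) ≠ 0 := by
    apply lin_ne_zero'
    rintro ⟨h1, h2⟩
    rw [h1, h2] at hdet
    omega
  have hcoe : ((g • τ : ℍ) : ℂ) = ((p : ℂ) * (τ : ℂ) + q) / ((r : ℂ) * (τ : ℂ) + s) := by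
    rw [UpperHalfPlane.specialLinearGroup_apply]
    simp only [UpperHalfPlane.coe_mk, algebraMap_int_eq, eq_intCast]
    push_cast
    rfl
  refine ⟨2*b*s*q + A*(s*p + q*r) - 2*c*r*p, b*s^2 + A*s*r - c*r^2,
    -b*q^2 - A*q*p + c*p^2, ?_, ?_⟩
  · linear_combination ((p*s - q*r + 1) * (A^2 + 4*b*c)) * hdet + hd
  · rw [hcoe]
    push_cast
    field_simp
    linear_combination (((p : ℂ)*(s:ℂ) - (q : ℂ)*(r:ℂ))^2) * hq

open UpperHalfPlane ModularGroup in
/-- Gauss reduction: any `τ` satisfying an integral quadratic of discriminant `-3`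
with positive leading coefficient is in the orbit of `ρ`. -/
lemma reduce : ∀ n : ℕ, ∀ (τ : ℍ) (A b c : ℤ), 0 < b → b ≤ (n : ℤ) →
    A ^ 2 + 4 * b * c = -3 →
    (b : ℂ) * (τ : ℂ) ^ 2 - (A : ℂ) * (τ : ℂ) - (c : ℂ) = 0 →
    ∃ g : Matrix.SpecialLinearGroup (Fin 2) ℤ, g • rhoPt = τ := by
  intro n
  induction n with
  | zero => intro τ A b c hb hn hd hq; exfalso; omega
  | succ n ih =>
    intro τ A b c hb hn hd hq
    set z := (τ : ℂ) with hzdef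
    set t : ℤ := -((A + b) / (2 * b)) with ht
    set A' : ℤ := A + 2 * b * t with hA'
    set c' : ℤ := c - A * t - b * t ^ 2 with hc'
    have hmod : (A + b) % (2 * b) = A + b + 2 * b * t := by
      rw [ht, Int.emod_def]; ring
    have hrange : -b ≤ A' ∧ A' < b := by
      have h1 := Int.emod_nonneg (A + b) (by omega : (2 * b) ≠ 0)
      have h2 := Int.emod_lt_of_pos (A + b) (by omega : (0 : ℤ) < 2 * b)
      constructor <;> omega
    set τ' := ModularGroup.T ^ t • τ with hτ'
    have hw : (τ' : ℂ) = (t : ℝ) + z := by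
      rw [hτ', UpperHalfPlane.modular_T_zpow_smul, UpperHalfPlane.coe_vadd]
    set w := (τ' : ℂ) with hwdef
    have hq' : (b : ℂ) * w ^ 2 - (A' : ℂ) * w - (c' : ℂ) = 0 := by
      rw [hw, hA', hc']; push_cast; linear_combination hq
    have hd' : A' ^ 2 + 4 * b * c' = -3 := by rw [hA', hc']; linear_combination hd
    set m : ℤ := -c' with hm
    have hm4 : 4 * b * m = A' ^ 2 + 3 := by rw [hm]; linear_combination -hd'
    have hmpos : 0 < m := by nlinarith [sq_nonneg A']
    by_cases hcase : m < b
    · -- apply the inversion `S`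
      have hwne : w ≠ 0 := τ'.ne_zero
      set σ := ModularGroup.S • τ' with hσ
      have hσc : (σ : ℂ) = (-w)⁻¹ := by
        rw [hσ, UpperHalfPlane.modular_S_smul]
      have hqσ : (m : ℂ) * (σ : ℂ) ^ 2 - ((-A' : ℤ) : ℂ) * (σ : ℂ) - ((-b : ℤ) : ℂ) = 0 := by
        rw [hσc, hm]
        push_cast
        field_simp
        linear_combination hq'
      have hdσ : (-A') ^ 2 + 4 * m * (-b) = -3 := by rw [hm]; linear_combination hd'
      obtain ⟨g, hg⟩ := ih σ (-A') m (-b) hmpos (by omega) hdσ hqσ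
      refine ⟨(ModularGroup.T ^ t)⁻¹ * (ModularGroup.S⁻¹ * g), ?_⟩
      rw [mul_smul, mul_smul, hg, hσ, inv_smul_smul, hτ', inv_smul_smul]
    · push_neg at hcase
      have hA'sq : A' ^ 2 ≤ b ^ 2 := by nlinarith [hrange.1, hrange.2]
      have hb1 : b = 1 := by nlinarith
      have hA'1 : A' = -1 := by
        rcases (by omega : A' = -1 ∨ A' = 0) with h | h
        · exact h
        · exfalso; rw [h, hb1] at hm4; omega
      have hc'1 : c' = -1 := by
        have := hd'; rw [hA'1, hb1] at this; norm_num at this; omega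
      have hq2 : w ^ 2 + w + 1 = 0 := by
        have := hq'; rw [hA'1, hb1, hc'1] at this; push_cast at this
        linear_combination this
      have hs3 : (Real.sqrt 3 : ℂ) ^ 2 = 3 := by
        rw [← Complex.ofReal_pow, Real.sq_sqrt (by norm_num : (3:ℝ) ≥ 0)]
        norm_num
      have hI := Complex.I_sq
      have hfac : (2 * w + 1 - Real.sqrt 3 * Complex.I) *
          (2 * w + 1 + Real.sqrt 3 * Complex.I) = 0 := by
        linear_combination 4 * hq2 - Complex.I ^ 2 * hs3 - 3 * hI
      have hwim : 0 < w.im := by rw [hwdef, UpperHalfPlane.coe_im]; exact τ'.im_pos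
      rcases mul_eq_zero.mp hfac with h | h
      · have hrho : (ModularGroup.T ^ (-1 : ℤ)) • rhoPt = τ' := by
          apply UpperHalfPlane.ext
          rw [UpperHalfPlane.modular_T_zpow_smul, UpperHalfPlane.coe_vadd]
          show ((-1 : ℤ) : ℝ) + ((1 + Real.sqrt 3 * Complex.I) / 2 : ℂ) = w
          push_cast
          linear_combination -h / 2
        refine ⟨(ModularGroup.T ^ t)⁻¹ * ModularGroup.T ^ (-1 : ℤ), ?_⟩
        rw [mul_smul, hrho, hτ', inv_smul_smul]
      · exfalso
        have him := congrArg Complex.im h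
        simp [Complex.add_im, Complex.mul_im] at him
        nlinarith [Real.sqrt_nonneg 3, hwim]

/-- A point `τ ∈ ℍ` lies in the `SL₂(ℤ)`-orbit of `ρ = (1 + i√3)/2` if and only if
there are integers `A, b, c` with `A² + 4bc = −3` and `b·τ² − A·τ − c = 0`. -/
theorem stmt2 (τ : ℍ) :
    (∃ g : Matrix.SpecialLinearGroup (Fin 2) ℤ, g • rhoPt = τ) ↔
    ∃ A b c : ℤ, A ^ 2 + 4 * b * c = -3 ∧
      (b : ℂ) * (τ : ℂ) ^ 2 - (A : ℂ) * (τ : ℂ) - (c : ℂ) = 0 := by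
  constructor
  · rintro ⟨g, rfl⟩
    apply Q_smul
    refine ⟨1, 1, -1, by norm_num, ?_⟩
    have hρ : (rhoPt : ℂ) = (1 + Real.sqrt 3 * Complex.I) / 2 := rfl
    have hs3 : (Real.sqrt 3 : ℂ) ^ 2 = 3 := by
      rw [← Complex.ofReal_pow, Real.sq_sqrt (by norm_num : (3:ℝ) ≥ 0)]
      norm_num
    have hI := Complex.I_sq
    rw [hρ]
    push_cast
    linear_combination (Complex.I ^ 2 / 4) * hs3 + (3 / 4) * hI
  · rintro ⟨A, b, c, hd, hq⟩
    rcases lt_trichotomy b 0 with hb | hb | hb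
    · exact reduce (-b).natAbs τ (-A) (-b) (-c) (by omega) (Int.le_natAbs)
        (by linear_combination hd) (by push_cast; linear_combination -hq)
    · exfalso; rw [hb] at hd; nlinarith [sq_nonneg A]
    · exact reduce b.natAbs τ A b c hb Int.le_natAbs hd hq
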